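/- There exists an absolute constant c > 0 with the following property. Let (Z,d) be a finite metric space, let P = {p_1, …, p_m} ⊆ Z with m ≥ 2 and diam(P) > 0, and let n ≥ max(m,4) be a power of two. Let β_1, …, β_m be independent random variables, each distributed with the density f of dist(diam(P), n), and define the random blocks P_i = {x ∈ P \ (P_1 ∪ ⋯ ∪ P_{i−1}) : d(x, p_i) ≤ β_i} for i = 1, …, m. Then for every y ∈ Z and every real r with 0 ≤ r ≤ diam(P)/(16 log₂ n), the expected number of indices i such that P_i non-terminally intersects B(y,r) is at most c · (r / diam(P)) · log₂ n, where B(y,r) = {z ∈ Z : d(z,y) ≤ r}. -/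

import Mathlib

open MeasureTheory
open scoped Classical

/-- The density `f` of the distribution `dist(δ, k)` where `k = 2^L`. -/
noncomputable def distDensity (δ : ℝ) (L : ℕ) (x : ℝ) : ℝ :=
  if x < δ/8 ∨ δ/4 < x then 0
  else if δ/4 - δ/(8*(L:ℝ)) ≤ x then (8*(L:ℝ)/δ) * (2 / 2^L)
  else (8*(L:ℝ)/δ) * (1/2 : ℝ) ^ ((⌊(x - δ/8) / (δ/(8*(L:ℝ)))⌋).toNat + 1)

/-!
If block `i` meets `B(y, r)` non-terminally, then `β_i ∈ [d_i - r, d_i + r)` for `d_i = d(p_i, y)`,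
and `β_l < d_l + r` for every `l < i`, since otherwise block `l` would swallow the whole ball.
By independence these conditions have probability `ν[d_i - r, d_i + r) · ∏_{l<i} (1 - q_l)`,
where `ν` is the law `dist(δ, 2^L)` and `q_l = ν[d_l + r, ∞)`. The density of `ν` drops by at
most a factor `4` over two of its steps of length `δ/(8L) ≥ 2r`, so averaging gives
`ν[d - r, d + r) ≤ (64 rL/δ) ν[d + r, ∞)` away from the top of the support and
`ν[d - r, d + r) ≤ 128 rL/(δ 2^L)` near it. Finally
`∑_i q_i ∏_{l<i} (1 - q_l) = 1 - ∏_l (1 - q_l) ≤ 1` and `m ≤ 2^L`.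
-/

open Set ProbabilityTheory

section Density

variable {δ x x' : ℝ} {L : ℕ}

theorem distDensity_nonneg (hδ : 0 ≤ δ) (x : ℝ) : 0 ≤ distDensity δ L x := by
  unfold distDensity
  split_ifs <;> positivity

/-- `k` is the index of the subinterval of length `δ/(8L)` containing `x`; the top one `I_L` carries
the same value as `I_{L-1}`. -/
theorem distDensity_eq_of_mem_Icc (hδ : 0 < δ) (hL : 1 ≤ L) (hx : x ∈ Icc (δ/8) (δ/4)) :
    distDensity δ L x = 8 * L / δ *
      (1/2 : ℝ) ^ min ((⌊(x - δ/8) / (δ/(8*(L:ℝ)))⌋).toNat + 1) (L - 1) := by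
  have hw : 0 < δ/(8*(L:ℝ)) := by positivity
  have hδ4 : δ/4 = δ/8 + L * (δ/(8*(L:ℝ))) := by field_simp; ring
  unfold distDensity
  rw [if_neg (by rintro (h | h) <;> linarith [hx.1, hx.2])]
  split_ifs with htop
  · have hk : (L:ℤ) - 1 ≤ ⌊(x - δ/8) / (δ/(8*(L:ℝ)))⌋ := by
      rw [Int.le_floor, le_div_iff₀ hw]
      push_cast
      linarith
    rw [min_eq_right (by omega), div_pow, one_pow]
    congr 1
    rw [div_eq_div_iff (by positivity) (by positivity), one_mul, ← pow_succ', Nat.sub_add_cancel hL]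
  · have hk : ⌊(x - δ/8) / (δ/(8*(L:ℝ)))⌋ < (L:ℤ) - 1 := by
      rw [Int.floor_lt, div_lt_iff₀ hw]
      push_cast
      linarith
    have hk0 : 0 ≤ ⌊(x - δ/8) / (δ/(8*(L:ℝ)))⌋ :=
      Int.floor_nonneg.2 (div_nonneg (by linarith [hx.1]) hw.le)
    rw [min_eq_left (by omega)]

/-- Moving right by at most two subintervals raises the exponent by at most two. -/
theorem distDensity_le_four_mul (hδ : 0 < δ) (hL : 1 ≤ L) (hxx' : x ≤ x')
    (hx' : x' ≤ x + 2 * (δ/(8*(L:ℝ)))) (hx'δ : x' ≤ δ/4) :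
    distDensity δ L x ≤ 4 * distDensity δ L x' := by
  by_cases hx : x < δ/8
  · rw [distDensity, if_pos (Or.inl hx)]
    linarith [distDensity_nonneg (L := L) hδ.le x']
  have hw : 0 < δ/(8*(L:ℝ)) := by positivity
  rw [distDensity_eq_of_mem_Icc hδ hL ⟨not_lt.1 hx, hxx'.trans hx'δ⟩,
    distDensity_eq_of_mem_Icc hδ hL ⟨(not_lt.1 hx).trans hxx', hx'δ⟩]
  have hk : ⌊(x' - δ/8) / (δ/(8*(L:ℝ)))⌋ ≤ ⌊(x - δ/8) / (δ/(8*(L:ℝ)))⌋ + 2 := by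
    rw [← Int.floor_add_ofNat]
    refine Int.floor_le_floor ?_
    rw [div_add' _ _ _ hw.ne', div_le_div_iff_of_pos_right hw]
    linarith
  set e := min ((⌊(x - δ/8) / (δ/(8*(L:ℝ)))⌋).toNat + 1) (L - 1)
  set e' := min ((⌊(x' - δ/8) / (δ/(8*(L:ℝ)))⌋).toNat + 1) (L - 1)
  have he : e' ≤ e + 2 := by omega
  have hpow : (1/2 : ℝ) ^ e ≤ 4 * (1/2) ^ e' := calc
    (1/2 : ℝ) ^ e = 4 * (1/2) ^ (e + 2) := by ring
    _ ≤ 4 * (1/2) ^ e' :=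
      mul_le_mul_of_nonneg_left (pow_le_pow_of_le_one (by norm_num) (by norm_num) he) (by norm_num)
  calc 8 * L / δ * (1/2 : ℝ) ^ e ≤ 8 * L / δ * (4 * (1/2) ^ e') := by gcongr
    _ = 4 * (8 * L / δ * (1/2) ^ e') := by ring

theorem distDensity_div_four (hδ : 0 < δ) :
    distDensity δ L (δ/4) = 8 * L / δ * (2 / 2 ^ L) := by
  have hw : 0 ≤ δ/(8*(L:ℝ)) := by positivity
  rw [distDensity, if_neg (by rintro (h | h) <;> linarith), if_pos (by linarith)]

end Density

section Mass

variable {g : ℝ → ℝ} {a b h M C : ℝ}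

theorem withDensity_ofReal_Ico_le (hg : ∀ x ∈ Ico a b, g x ≤ M) :
    volume.withDensity (fun x => ENNReal.ofReal (g x)) (Ico a b)
      ≤ ENNReal.ofReal M * ENNReal.ofReal (b - a) := by
  rw [withDensity_apply _ measurableSet_Ico, ← Real.volume_Ico, ← setLIntegral_const]
  exact setLIntegral_mono' measurableSet_Ico fun x hx => ENNReal.ofReal_le_ofReal (hg x hx)

/-- Averaging the pointwise comparison over `x' ∈ [b, b + h)`. -/
theorem withDensity_ofReal_Ico_le_mul (hC : 0 ≤ C)
    (hg : ∀ x ∈ Ico a b, ∀ x' ∈ Ico b (b + h), g x ≤ C * g x') :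
    ENNReal.ofReal h * volume.withDensity (fun x => ENNReal.ofReal (g x)) (Ico a b)
      ≤ ENNReal.ofReal C * ENNReal.ofReal (b - a)
        * volume.withDensity (fun x => ENNReal.ofReal (g x)) (Ico b (b + h)) := by
  set ν := volume.withDensity fun x => ENNReal.ofReal (g x)
  have hpt : ∀ x' ∈ Ico b (b + h),
      ν (Ico a b) ≤ ENNReal.ofReal C * ENNReal.ofReal (b - a) * ENNReal.ofReal (g x') :=
    fun x' hx' => (withDensity_ofReal_Ico_le fun x hx => hg x hx x' hx').trans_eq
      (by rw [ENNReal.ofReal_mul hC]; ring)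
  calc ENNReal.ofReal h * ν (Ico a b) = ∫⁻ _ in Ico b (b + h), ν (Ico a b) := by
        rw [setLIntegral_const, Real.volume_Ico, add_sub_cancel_left, mul_comm]
    _ ≤ ∫⁻ x' in Ico b (b + h), ENNReal.ofReal C * ENNReal.ofReal (b - a) * ENNReal.ofReal (g x') :=
        setLIntegral_mono' measurableSet_Ico hpt
    _ = ENNReal.ofReal C * ENNReal.ofReal (b - a) * ν (Ico b (b + h)) := by
        rw [lintegral_const_mul' _ _ (by finiteness), withDensity_apply _ measurableSet_Ico]

end Mass

noncomputable def distMeasure (δ : ℝ) (L : ℕ) : Measure ℝ :=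
  volume.withDensity fun x => ENNReal.ofReal (distDensity δ L x)

section DistMeasure

variable {δ r : ℝ} {L : ℕ}

theorem distMeasure_real_Ico_le_mul_Ici [IsFiniteMeasure (distMeasure δ L)] (hδ : 0 < δ)
    (hL : 1 ≤ L) (hr : 0 ≤ r) (hrw : 2 * r ≤ δ/(8*(L:ℝ))) {c : ℝ}
    (hc : c + r + δ/(8*(L:ℝ)) ≤ δ/4) :
    (distMeasure δ L).real (Ico (c - r) (c + r))
      ≤ 64 * (r * L / δ) * (distMeasure δ L).real (Ici (c + r)) := by
  set w := δ/(8*(L:ℝ)) with hw_def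
  have hw : 0 < w := by positivity
  have hcmp : ENNReal.ofReal w * distMeasure δ L (Ico (c - r) (c + r))
      ≤ ENNReal.ofReal 4 * ENNReal.ofReal (c + r - (c - r))
        * distMeasure δ L (Ico (c + r) (c + r + w)) :=
    withDensity_ofReal_Ico_le_mul (by norm_num) fun x hx x' hx' =>
      distDensity_le_four_mul hδ hL (hx.2.le.trans hx'.1) (by linarith [hx.1, hx'.2])
        (by linarith [hx'.2])
  have hreal := ENNReal.toReal_mono (by finiteness) hcmp
  simp only [ENNReal.toReal_mul, ENNReal.toReal_ofReal hw.le, ← measureReal_def,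
    ENNReal.toReal_ofReal (by norm_num : (0:ℝ) ≤ 4), add_sub_sub_cancel,
    ENNReal.toReal_ofReal (by positivity : 0 ≤ r + r)] at hreal
  have hIci : (distMeasure δ L).real (Ico (c + r) (c + r + w))
      ≤ (distMeasure δ L).real (Ici (c + r)) :=
    measureReal_mono Ico_subset_Ici_self
  have h64 : 64 * (r * L / δ) = 8 * r / w := by rw [hw_def]; field_simp; ring
  rw [h64, div_mul_eq_mul_div, le_div_iff₀ hw]
  nlinarith

theorem distMeasure_real_Ico_le_of_lt (hδ : 0 < δ) (hL : 1 ≤ L) (hr : 0 ≤ r)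
    (hrw : 2 * r ≤ δ/(8*(L:ℝ))) {c : ℝ} (hc : δ/4 < c + r + δ/(8*(L:ℝ))) :
    (distMeasure δ L).real (Ico (c - r) (c + r)) ≤ 128 * (r * L / δ) / 2 ^ L := by
  have hf := distDensity_nonneg (L := L) hδ.le (δ/4)
  have hbound : ∀ x ∈ Ico (c - r) (c + r), distDensity δ L x ≤ 4 * distDensity δ L (δ/4) := by
    intro x hx
    by_cases hxδ : x ≤ δ/4
    · exact distDensity_le_four_mul hδ hL hxδ (by linarith [hx.1]) le_rfl
    · rw [distDensity, if_pos (Or.inr (not_le.1 hxδ))]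
      linarith
  have hν : distMeasure δ L (Ico (c - r) (c + r))
      ≤ ENNReal.ofReal (4 * distDensity δ L (δ/4) * (2*r)) := by
    rw [ENNReal.ofReal_mul (by linarith)]
    exact (withDensity_ofReal_Ico_le hbound).trans_eq (by ring_nf)
  calc (distMeasure δ L).real (Ico (c - r) (c + r)) ≤ 4 * distDensity δ L (δ/4) * (2*r) :=
        ENNReal.toReal_le_of_le_ofReal (by positivity) hν
    _ = 128 * (r * L / δ) / 2 ^ L := by rw [distDensity_div_four hδ]; field_simp; ring

theorem distMeasure_real_Ico_le [IsFiniteMeasure (distMeasure δ L)] (hδ : 0 < δ) (hL : 1 ≤ L)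
    (hr : 0 ≤ r) (hrw : 2 * r ≤ δ/(8*(L:ℝ))) (c : ℝ) :
    (distMeasure δ L).real (Ico (c - r) (c + r))
      ≤ 64 * (r * L / δ) * (distMeasure δ L).real (Ici (c + r)) + 128 * (r * L / δ) / 2 ^ L := by
  rcases le_or_gt (c + r + δ/(8*(L:ℝ))) (δ/4) with hc | hc
  · exact (distMeasure_real_Ico_le_mul_Ici hδ hL hr hrw hc).trans
      (le_add_of_nonneg_right (by positivity))
  · exact (distMeasure_real_Ico_le_of_lt hδ hL hr hrw hc).trans
      (le_add_of_nonneg_left (by positivity))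

end DistMeasure

section Carving

variable {Z ι : Type*} [PseudoMetricSpace Z] [Preorder ι]

def IsBallCarving (P : Set Z) (p : ι → Z) (b : ι → ℝ) (B : ι → Set Z) : Prop :=
  ∀ i, B i = {x | x ∈ P ∧ (∀ j, j < i → x ∉ B j) ∧ dist x (p i) ≤ b i}

/-- An `abbrev`, so that `Decidable` instances are found through the conjunction. -/
abbrev MeetsNonterminally (B : ι → Set Z) (s : Set Z) (i : ι) : Prop :=
  (B i ∩ s).Nonempty ∧ ∃ j, i < j ∧ (B j ∩ s).Nonempty

variable {P : Set Z} {p : ι → Z} {b : ι → ℝ} {B : ι → Set Z} {y : Z} {r : ℝ}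

/-- A block whose radius covers the whole ball absorbs every point of it not taken earlier. -/
theorem IsBallCarving.inter_closedBall_eq_empty (hB : IsBallCarving P p b B) {l j : ι}
    (hlj : l < j) (hl : dist (p l) y + r ≤ b l) : B j ∩ Metric.closedBall y r = ∅ := by
  refine eq_empty_iff_forall_notMem.2 fun x ⟨hxj, hxy⟩ => ?_
  rw [hB j] at hxj
  obtain ⟨hxP, hprev, -⟩ := hxj
  refine hprev l hlj ?_
  rw [hB l]
  refine ⟨hxP, fun k hk => hprev k (hk.trans hlj), ?_⟩
  linarith [dist_triangle x y (p l), Metric.mem_closedBall.1 hxy, dist_comm y (p l)]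

theorem IsBallCarving.mem_Ico_and_forall_lt_of_meetsNonterminally (hB : IsBallCarving P p b B)
    {i : ι} (h : MeetsNonterminally B (Metric.closedBall y r) i) :
    b i ∈ Ico (dist (p i) y - r) (dist (p i) y + r) ∧ ∀ l < i, b l < dist (p l) y + r := by
  obtain ⟨⟨x, hxi, hxy⟩, j, hij, hj⟩ := h
  have hlt : ∀ l, l < j → b l < dist (p l) y + r := fun l hl =>
    not_le.1 fun hle => hj.ne_empty (hB.inter_closedBall_eq_empty hl hle)
  rw [hB i] at hxi
  refine ⟨⟨?_, hlt i hij⟩, fun l hl => hlt l (hl.trans hij)⟩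
  linarith [dist_triangle (p i) x y, Metric.mem_closedBall.1 hxy, dist_comm x (p i), hxi.2.2]

end Carving

section Probability

variable {Ω ι : Type*} [MeasurableSpace Ω] {μ : Measure Ω}

theorem ProbabilityTheory.iIndepFun.measureReal_preimage_inter_biInter_preimage
    {ν : Measure ℝ} {β : ι → Ω → ℝ} (hInd : iIndepFun β μ) (hβ : ∀ i, Measurable (β i))
    (hmap : ∀ i, μ.map (β i) = ν) {i : ι} {T : Finset ι} (hi : i ∉ T) {A : Set ℝ}
    {s : ι → Set ℝ} (hA : MeasurableSet A) (hs : ∀ l, MeasurableSet (s l)) :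
    μ.real (β i ⁻¹' A ∩ ⋂ l ∈ T, β l ⁻¹' s l) = ν.real A * ∏ l ∈ T, ν.real (s l) := by
  have hpre : ∀ l t, MeasurableSet t → μ (β l ⁻¹' t) = ν t := fun l t ht => by
    rw [← Measure.map_apply (hβ l) ht, hmap]
  set u := Function.update s i A
  have hui : u i = A := Function.update_self _ _ _
  have hu : ∀ l ∈ T, u l = s l := fun l hl => Function.update_of_ne (ne_of_mem_of_not_mem hl hi) _ _
  have hset : β i ⁻¹' A ∩ ⋂ l ∈ T, β l ⁻¹' s l = ⋂ l ∈ insert i T, β l ⁻¹' u l := by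
    rw [Finset.set_biInter_insert, hui]
    congr 1
    exact Set.iInter₂_congr fun l hl => by rw [hu l hl]
  have hmeas : ∀ l ∈ insert i T, MeasurableSet (u l) := fun l _ => by
    by_cases h : l = i
    · simp [u, h, hA]
    · simp [u, h, hs l]
  rw [measureReal_def, hset, hInd.measure_inter_preimage_eq_mul _ hmeas, Finset.prod_insert hi,
    ENNReal.toReal_mul, ENNReal.toReal_prod, hpre i _ (hmeas i (Finset.mem_insert_self _ _)), hui]
  refine congrArg _ (Finset.prod_congr rfl fun l hl => ?_)
  rw [hu l hl, hpre l _ (hs l), measureReal_def]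

theorem integral_sum_ite_le_sum_measureReal [IsFiniteMeasure μ] [Fintype ι] {E : ι → Ω → Prop}
    [∀ i ω, Decidable (E i ω)] {F : ι → Set Ω} (hF : ∀ i, MeasurableSet (F i))
    (hEF : ∀ i ω, E i ω → ω ∈ F i) :
    ∫ ω, (∑ i, if E i ω then (1:ℝ) else 0) ∂μ ≤ ∑ i, μ.real (F i) := by
  have hint : ∀ i ∈ Finset.univ, Integrable ((F i).indicator 1) μ :=
    fun i _ => (integrable_const (1:ℝ)).indicator (hF i)
  calc ∫ ω, (∑ i, if E i ω then (1:ℝ) else 0) ∂μ ≤ ∫ ω, ∑ i, (F i).indicator 1 ω ∂μ := by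
        refine integral_mono_of_nonneg (ae_of_all _ fun ω => Finset.sum_nonneg fun i _ => ?_)
          (integrable_finsetSum _ hint) (ae_of_all _ fun ω => Finset.sum_le_sum fun i _ => ?_)
        · split_ifs <;> norm_num
        · split_ifs with h
          · simp [hEF i ω h]
          · exact indicator_nonneg (fun _ _ => zero_le_one) _
    _ = ∑ i, μ.real (F i) := by
        rw [integral_finsetSum _ hint]
        exact Finset.sum_congr rfl fun i _ => integral_indicator_one (hF i)

theorem IsBallCarving.integral_sum_meetsNonterminally_le {Z ι : Type*} [PseudoMetricSpace Z]
    [Fintype ι] [LinearOrder ι] [IsProbabilityMeasure μ] {ν : Measure ℝ} [IsProbabilityMeasure ν]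
    {P : Set Z} {p : ι → Z} {β : ι → Ω → ℝ} {B : ι → Ω → Set Z} {y : Z} {r : ℝ}
    [∀ ω i, Decidable (MeetsNonterminally (B · ω) (Metric.closedBall y r) i)]
    (hB : ∀ ω, IsBallCarving P p (β · ω) (B · ω)) (hβ : ∀ i, Measurable (β i))
    (hInd : iIndepFun β μ) (hmap : ∀ i, μ.map (β i) = ν) :
    ∫ ω, (∑ i, if MeetsNonterminally (B · ω) (Metric.closedBall y r) i then (1:ℝ) else 0) ∂μ
      ≤ ∑ i, ν.real (Ico (dist (p i) y - r) (dist (p i) y + r))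
          * ∏ l with l < i, (1 - ν.real (Ici (dist (p l) y + r))) := by
  set F : ι → Set Ω := fun i => β i ⁻¹' Ico (dist (p i) y - r) (dist (p i) y + r) ∩
    ⋂ l ∈ ({l | l < i} : Finset ι), β l ⁻¹' Iio (dist (p l) y + r)
  have hF : ∀ i, MeasurableSet (F i) := fun i => (hβ i measurableSet_Ico).inter
    (Finset.measurableSet_biInter _ fun l _ => hβ l measurableSet_Iio)
  have hEF : ∀ i ω, MeetsNonterminally (B · ω) (Metric.closedBall y r) i → ω ∈ F i :=
    fun i ω h => by
      obtain ⟨hi, hlt⟩ := (hB ω).mem_Ico_and_forall_lt_of_meetsNonterminally h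
      exact ⟨hi, by simpa using hlt⟩
  refine (integral_sum_ite_le_sum_measureReal hF hEF).trans_eq (Finset.sum_congr rfl fun i _ => ?_)
  rw [hInd.measureReal_preimage_inter_biInter_preimage hβ hmap (by simp) measurableSet_Ico
    fun l => measurableSet_Iio]
  simp_rw [← compl_Ici, probReal_compl_eq_one_sub measurableSet_Ici]

end Probability

theorem sum_mul_prod_one_sub_le {ι : Type*} [Fintype ι] [LinearOrder ι] {q a : ι → ℝ} {K E : ℝ}
    (hq0 : ∀ i, 0 ≤ q i) (hq1 : ∀ i, q i ≤ 1) (hK : 0 ≤ K) (hE : 0 ≤ E)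
    (ha : ∀ i, a i ≤ K * q i + E) :
    ∑ i, a i * ∏ l with l < i, (1 - q l) ≤ K + Fintype.card ι * E := by
  have hnonneg : ∀ t : Finset ι, 0 ≤ ∏ l ∈ t, (1 - q l) :=
    fun t => Finset.prod_nonneg fun l _ => sub_nonneg.2 (hq1 l)
  have hle_one : ∀ t : Finset ι, ∏ l ∈ t, (1 - q l) ≤ 1 :=
    fun t => Finset.prod_le_one (fun l _ => sub_nonneg.2 (hq1 l)) fun l _ => by linarith [hq0 l]
  calc ∑ i, a i * ∏ l with l < i, (1 - q l)
      ≤ ∑ i, (K * (q i * ∏ l with l < i, (1 - q l)) + E) := Finset.sum_le_sum fun i _ => by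
        nlinarith [ha i, hnonneg {l | l < i}, hle_one {l | l < i}, hq0 i]
    _ = K * (1 - ∏ l, (1 - q l)) + Fintype.card ι * E := by
        rw [Finset.sum_add_distrib, ← Finset.mul_sum, Finset.prod_one_sub_ordered, sub_sub_cancel,
          Finset.sum_const, Finset.card_univ, nsmul_eq_mul]
    _ ≤ K + Fintype.card ι * E := by nlinarith [hnonneg Finset.univ]

/-- There is an absolute constant `c > 0` with the following property.  In the
setting of the random partition (blocks `P_i` built from independent
`β_1, …, β_m` with density `f = distDensity (diam P) L`, where `n = 2^L ≥
max(m,4)` is a power of two), for every `y ∈ Z` and every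
`0 ≤ r ≤ diam(P)/(16 log₂ n)`, the expected number of indices `i` such that
`P_i` *non-terminally* intersects `B(y,r)` (i.e. `P_i ∩ B(y,r) ≠ ∅` and some
later block also meets `B(y,r)`) is at most `c·(r/diam P)·log₂ n`. -/
theorem expected_blocks_nonterminally_intersecting_ball_le :
    ∃ c : ℝ, 0 < c ∧
      ∀ (Z : Type) [MetricSpace Z] [Finite Z]
        (m : ℕ) (_ : 2 ≤ m) (p : Fin m → Z) (_ : Function.Injective p)
        (P : Set Z) (_ : P = Set.range p) (_ : 0 < Metric.diam P)
        (L : ℕ) (_ : 2 ≤ L) (_ : m ≤ 2^L)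
        (Ω : Type) [MeasurableSpace Ω] (μ : Measure Ω) [IsProbabilityMeasure μ]
        (β : Fin m → Ω → ℝ) (_ : ∀ i, Measurable (β i))
        (_ : ProbabilityTheory.iIndepFun β μ)
        (_ : ∀ i, Measure.map (β i) μ =
          volume.withDensity (fun x => ENNReal.ofReal (distDensity (Metric.diam P) L x)))
        (Pblk : Fin m → Ω → Set Z)
        (_ : ∀ ω i, Pblk i ω =
          {x | x ∈ P ∧ (∀ j, j < i → x ∉ Pblk j ω) ∧ dist x (p i) ≤ β i ω})
        (y : Z) (r : ℝ) (_ : 0 ≤ r) (_ : r ≤ Metric.diam P / (16 * (L:ℝ))),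
        (∫ ω, (∑ i : Fin m,
            if ((Pblk i ω ∩ Metric.closedBall y r).Nonempty ∧
                ∃ j, i < j ∧ (Pblk j ω ∩ Metric.closedBall y r).Nonempty)
            then (1:ℝ) else 0) ∂μ)
          ≤ c * (r / Metric.diam P) * (L:ℝ) := by
  refine ⟨192, by norm_num, ?_⟩
  intro Z _ _ m hm p _ P _ hδ L hL hmL Ω _ μ _ β hβ hInd hmap Pblk hPblk y r hr hrL
  set δ := Metric.diam P
  set ν := distMeasure δ L
  have hmap : ∀ i, μ.map (β i) = ν := hmap
  have : IsProbabilityMeasure ν :=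
    hmap ⟨0, by omega⟩ ▸ Measure.isProbabilityMeasure_map (hβ _).aemeasurable
  have h2r : 2 * r ≤ δ / (8 * L) := by
    rw [le_div_iff₀ (by positivity)]
    rw [le_div_iff₀ (by positivity)] at hrL
    linarith
  calc _ ≤ ∑ i, ν.real (Ico (dist (p i) y - r) (dist (p i) y + r))
          * ∏ l with l < i, (1 - ν.real (Ici (dist (p l) y + r))) :=
        IsBallCarving.integral_sum_meetsNonterminally_le (fun ω i => hPblk ω i) hβ hInd hmap
    _ ≤ 64 * (r * L / δ) + m * (128 * (r * L / δ) / 2 ^ L) := by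
        simpa using sum_mul_prod_one_sub_le (fun l => measureReal_nonneg)
          (fun l => measureReal_le_one) (by positivity) (by positivity)
          fun i => distMeasure_real_Ico_le hδ (by omega) hr h2r (dist (p i) y)
    _ ≤ 64 * (r * L / δ) + 2 ^ L * (128 * (r * L / δ) / 2 ^ L) := by gcongr; exact_mod_cast hmL
    _ = 192 * (r / δ) * L := by field_simp; ring
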